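/- For two orthonormal bases (e_i), (f_j) of a finite-dimensional space, unit vector ψ with ⟨e_x,ψ⟩ ≠ 0, the generalized conditional probability Tr(ρ ∘ P_{e_x} ∘ P_{f_p}) / Tr(ρ ∘ P_{e_x}) equals ⟨ψ, f_p⟩⟨f_p, e_x⟩ / ⟨ψ, e_x⟩ (the weak value formula). -/

import Mathlib

open scoped InnerProductSpace

/-- The rank-one operator `|ψ⟩⟨ψ| : x ↦ ⟨ψ, x⟩ • ψ`. -/
noncomputable def ketbra {H : Type*} [NormedAddCommGroup H] [InnerProductSpace ℂ H]
    (ψ : H) : H →ₗ[ℂ] H :=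
  (innerₛₗ ℂ ψ).smulRight ψ

/-! Both traces are of the form `Tr(A ∘ P_v) = ⟨v, A v⟩`, since `A ∘ P_v = |A v⟩⟨v|` has rank one.
Evaluating `A v` for `A = P_ψ ∘ P_{eₓ}` and `A = P_ψ` gives the numerator
`⟪eₓ, f_p⟫ ⟪ψ, eₓ⟫ ⟪f_p, ψ⟫` and the denominator `⟪ψ, eₓ⟫ ⟪eₓ, ψ⟫`, and `⟪ψ, eₓ⟫` cancels. -/

section

variable {H : Type*} [NormedAddCommGroup H] [InnerProductSpace ℂ H]

@[simp]
theorem ketbra_apply (ψ x : H) : ketbra ψ x = ⟪ψ, x⟫_ℂ • ψ := rfl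

theorem comp_ketbra (A : H →ₗ[ℂ] H) (v : H) :
    A ∘ₗ ketbra v = (innerₛₗ ℂ v).smulRight (A v) := by
  ext x
  simp

theorem trace_comp_ketbra [FiniteDimensional ℂ H] (A : H →ₗ[ℂ] H) (v : H) :
    LinearMap.trace ℂ H (A ∘ₗ ketbra v) = ⟪v, A v⟫_ℂ := by
  rw [comp_ketbra, LinearMap.trace_smulRight, innerₛₗ_apply_apply]

end

theorem stmt14_general {H : Type*} [NormedAddCommGroup H] [InnerProductSpace ℂ H]
    [FiniteDimensional ℂ H] (ψ ex fp : H) (hne : ⟪ex, ψ⟫_ℂ ≠ 0) :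
    LinearMap.trace ℂ H (ketbra ψ ∘ₗ ketbra ex ∘ₗ ketbra fp) /
        LinearMap.trace ℂ H (ketbra ψ ∘ₗ ketbra ex) =
      ⟪fp, ψ⟫_ℂ * ⟪ex, fp⟫_ℂ / ⟪ex, ψ⟫_ℂ := by
  have hne' : ⟪ψ, ex⟫_ℂ ≠ 0 := fun h => hne (inner_eq_zero_symm.mp h)
  rw [← LinearMap.comp_assoc, trace_comp_ketbra, trace_comp_ketbra]
  simp only [LinearMap.comp_apply, ketbra_apply, inner_smul_right]
  field_simp

/-- The weak value formula: for unit vectors `ψ`, `eₓ`, `f_p` with `⟨eₓ, ψ⟩ ≠ 0`,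
the generalized conditional probability `Tr(ρ ∘ P_{eₓ} ∘ P_{f_p}) / Tr(ρ ∘ P_{eₓ})`
equals `⟨ψ, f_p⟩⟨f_p, eₓ⟩ / ⟨ψ, eₓ⟩` (inner products linear in the first slot,
i.e. `⟨a, b⟩ = ⟪b, a⟫_ℂ`). -/
theorem stmt14 {H : Type*} [NormedAddCommGroup H] [InnerProductSpace ℂ H]
    [FiniteDimensional ℂ H] (ψ ex fp : H) (hψ : ‖ψ‖ = 1) (hex : ‖ex‖ = 1)
    (hfp : ‖fp‖ = 1) (hne : ⟪ex, ψ⟫_ℂ ≠ 0) :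
    LinearMap.trace ℂ H (ketbra ψ ∘ₗ ketbra ex ∘ₗ ketbra fp) /
        LinearMap.trace ℂ H (ketbra ψ ∘ₗ ketbra ex) =
      ⟪fp, ψ⟫_ℂ * ⟪ex, fp⟫_ℂ / ⟪ex, ψ⟫_ℂ :=
  stmt14_general ψ ex fp hne
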